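/- Let d be a type, let ctx be a list of elements of d, and let f be a formula of the deep-embedded diagrammatic language. If for every diagram model M on d the evaluation formula_eval M ctx f holds, then for every diagram model M on d the evaluation formula_eval M ctx (formula_dual f) holds. -/
import Mathlib


/-- A finite quiver: a number of vertices (the vertex set being `{0, …, n-1}`)
together with a finite list of arcs, each arc a pair (source, target). -/
structure Quiv where
  nbVertex : ℕ
  arcs : List (ℕ × ℕ)

/-- The dual quiver: same vertices, every arc reversed. -/
def Quiv.dual (Q : Quiv) : Quiv :=
  ⟨Q.nbVertex, Q.arcs.map fun a => (a.2, a.1)⟩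

/-- A path from `u` to `v` in `Q`: a list of indices into `Q.arcs` selecting a chain
of consecutive arcs starting at `u` and ending at `v`. -/
inductive Quiv.IsPath (Q : Quiv) : ℕ → List ℕ → ℕ → Prop
  | nil (u : ℕ) : Quiv.IsPath Q u [] u
  | cons {u v w i : ℕ} {p : List ℕ} :
      Q.arcs[i]? = some (u, v) → Quiv.IsPath Q v p w → Quiv.IsPath Q u (i :: p) w

/-- A subquiver: a list of selected vertex labels and a list of selected arc
indices, determining a restriction operation on quivers. -/
structure Subquiv where
  vertices : List ℕ
  arcs : List ℕ

/-- Terms of the deep-embedded language: variables (de Bruijn indices) and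
restrictions along subquivers. -/
inductive Term where
  | var : ℕ → Term
  | restr : Subquiv → Term → Term

/-- Formulas of the deep-embedded first-order language for diagrams. -/
inductive Formula where
  | all : Quiv → Formula → Formula
  | ex : Quiv → Formula → Formula
  | imp : Formula → Formula → Formula
  | and : Formula → Formula → Formula
  | tru : Formula
  | commute : Term → Formula
  | eqD : Term → Term → Formula

/-- The dual formula: every quiver annotation is replaced by its dual quiver. -/
def Formula.dual : Formula → Formula
  | .all Q f => .all Q.dual f.dual
  | .ex Q f => .ex Q.dual f.dual
  | .imp f1 f2 => .imp f1.dual f2.dual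
  | .and f1 f2 => .and f1.dual f2.dual
  | .tru => .tru
  | .commute t => .commute t
  | .eqD t1 t2 => .eqD t1 t2

/-- A path relation: a family of equivalence relations on finite sequences of arc
indices, indexed by pairs of vertices, compatible with concatenation. -/
structure PathRel where
  rel : ℕ → ℕ → List ℕ → List ℕ → Prop
  equiv : ∀ u v, Equivalence (rel u v)
  comp : ∀ u v w p p' q q', rel u v p p' → rel v w q q' →
    rel u w (p ++ q) (p' ++ q')

/-- The dual path relation, on reversed paths. -/
def PathRel.dual (r : PathRel) : PathRel where
  rel u v p q := r.rel v u p.reverse q.reverse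
  equiv u v :=
    ⟨fun _ => (r.equiv v u).refl _, fun h => (r.equiv v u).symm h,
     fun h1 h2 => (r.equiv v u).trans h1 h2⟩
  comp u v w p p' q q' h1 h2 := by
    simpa [List.reverse_append] using r.comp w v u _ _ _ _ h2 h1

/-- A diagram model on a carrier type `d`: an underlying quiver map, a restriction
operation, a setoid (equivalence) relation, and a path relation for each diagram. -/
structure Model (d : Type*) where
  toQuiver : d → Quiv
  restr : Subquiv → d → d
  eqD : d → d → Prop
  eqD_equiv : Equivalence eqD
  eqComp : d → PathRel

/-- The dual model: same carrier, restriction and setoid relation, but the quiver map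
is composed with quiver dualization and each path relation is replaced by the path
relation on reversed paths. -/
def Model.dual {d : Type*} (M : Model d) : Model d where
  toQuiver D := (M.toQuiver D).dual
  restr := M.restr
  eqD := M.eqD
  eqD_equiv := M.eqD_equiv
  eqComp D := (M.eqComp D).dual

/-- A diagram commutes when its path relation is full on its underlying quiver:
any two paths with the same source and the same target are related. -/
def Model.Commutes {d : Type*} (M : Model d) (D : d) : Prop :=
  ∀ u v p q, (M.toQuiver D).IsPath u p v → (M.toQuiver D).IsPath u q v →
    (M.eqComp D).rel u v p q

/-- Evaluation of a term in a context (a list of diagrams): `var k` looks up the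
`k`-th entry (`none` if the context is too short), `restr m t` applies the
restriction operation. -/
def termEval {d : Type*} (M : Model d) (ctx : List d) : Term → Option d
  | .var k => ctx[k]?
  | .restr m t => (termEval M ctx t).map (M.restr m)

/-- Evaluation of a formula in a model, relative to a context of diagrams. -/
def formulaEval {d : Type*} (M : Model d) : List d → Formula → Prop
  | ctx, .all Q f => ∀ D : d, M.toQuiver D = Q → formulaEval M (D :: ctx) f
  | ctx, .ex Q f => ∃ D : d, M.toQuiver D = Q ∧ formulaEval M (D :: ctx) f
  | ctx, .imp f1 f2 => formulaEval M ctx f1 → formulaEval M ctx f2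
  | ctx, .and f1 f2 => formulaEval M ctx f1 ∧ formulaEval M ctx f2
  | _, .tru => True
  | ctx, .commute t =>
      match termEval M ctx t with
      | some D => M.Commutes D
      | none => False
  | ctx, .eqD t1 t2 =>
      match termEval M ctx t1, termEval M ctx t2 with
      | some D1, some D2 => M.eqD D1 D2
      | _, _ => False

lemma Quiv.dual_dual (Q : Quiv) : Q.dual.dual = Q := by
  cases Q with
  | mk n a =>
    simp only [Quiv.dual, List.map_map]
    exact congrArg _ (List.map_id a)

lemma Quiv.IsPath.append {Q : Quiv} {u v w : ℕ} {p q : List ℕ}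
    (h1 : Q.IsPath u p v) (h2 : Q.IsPath v q w) : Q.IsPath u (p ++ q) w := by
  induction h1 with
  | nil => simpa
  | cons ha _ ih => exact .cons ha (ih h2)

lemma Quiv.IsPath.dual {Q : Quiv} {u v : ℕ} {p : List ℕ}
    (h : Q.IsPath u p v) : Q.dual.IsPath v p.reverse u := by
  induction h with
  | nil => exact .nil _
  | @cons u v w i p ha _ ih =>
    have harc : Q.dual.arcs[i]? = some (v, u) := by
      simp [Quiv.dual, List.getElem?_map, ha]
    simpa using ih.append (.cons harc (.nil _))

lemma Quiv.IsPath.of_dual {Q : Quiv} {u v : ℕ} {p : List ℕ}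
    (h : Q.dual.IsPath u p v) : Q.IsPath v p.reverse u := by
  have := h.dual
  rwa [Quiv.dual_dual] at this

lemma Model.dual_commutes_iff {d : Type*} (M : Model d) (D : d) :
    M.dual.Commutes D ↔ M.Commutes D := by
  constructor
  · intro h u v p q hp hq
    have := h v u p.reverse q.reverse hp.dual hq.dual
    simpa [Model.dual, PathRel.dual] using this
  · intro h u v p q hp hq
    exact h v u p.reverse q.reverse hp.of_dual hq.of_dual

lemma termEval_dual {d : Type*} (M : Model d) (ctx : List d) (t : Term) :
    termEval M.dual ctx t = termEval M ctx t := by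
  induction t with
  | var k => rfl
  | restr m t ih => simp only [termEval, ih]; rfl

lemma formulaEval_dual_iff {d : Type*} (M : Model d) (f : Formula) :
    ∀ ctx, formulaEval M.dual ctx f ↔ formulaEval M ctx f.dual := by
  induction f with
  | all Q f ih =>
    intro ctx
    simp only [formulaEval, Formula.dual, Model.dual]
    constructor
    · intro h D hD
      exact (ih _).mp (h D (by rw [hD, Quiv.dual_dual]))
    · intro h D hD
      refine (ih _).mpr (h D ?_)
      rw [← hD, Quiv.dual_dual]
  | ex Q f ih =>
    intro ctx
    simp only [formulaEval, Formula.dual, Model.dual]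
    constructor
    · rintro ⟨D, hD, h⟩
      exact ⟨D, by rw [← hD, Quiv.dual_dual], (ih _).mp h⟩
    · rintro ⟨D, hD, h⟩
      exact ⟨D, by rw [hD, Quiv.dual_dual], (ih _).mpr h⟩
  | imp f1 f2 ih1 ih2 =>
    intro ctx
    simp only [formulaEval, Formula.dual, ih1, ih2]
  | and f1 f2 ih1 ih2 =>
    intro ctx
    simp only [formulaEval, Formula.dual, ih1, ih2]
  | tru => intro ctx; simp [formulaEval, Formula.dual]
  | commute t =>
    intro ctx
    simp only [formulaEval, Formula.dual, termEval_dual]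
    cases termEval M ctx t with
    | none => simp
    | some D => simp [Model.dual_commutes_iff]
  | eqD t1 t2 =>
    intro ctx
    simp only [formulaEval, Formula.dual, termEval_dual]
    cases termEval M ctx t1 <;> cases termEval M ctx t2 <;>
      simp [Model.dual]

/-- Duality theorem: if a formula is valid in every diagram model on `d`, then so is
its dual formula. -/
theorem duality_theorem {d : Type*} (ctx : List d) (f : Formula)
    (h : ∀ M : Model d, formulaEval M ctx f) :
    ∀ M : Model d, formulaEval M ctx f.dual := by
  exact fun M => (formulaEval_dual_iff M f ctx).mp (h M.dual)
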